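/- Let L be a lattice of signature (2,n), let w ∈ L⊗ℂ satisfy (w,w) = 0 and (w,w̄) > 0, and set S = {x ∈ L : (x,w) = 0 and (x,w̄) = 0} and T = {x ∈ L : (x,s) = 0 for all s ∈ S}. Let g be an isometry of L (extended ℂ-linearly to L⊗ℂ) with g(w) = α·w for some α ∈ ℂ*, α ≠ 1. If x ∈ T⊗ℂ satisfies g(x) = x, then x = 0. -/

import Mathlib

namespace A0607339

/-- Extension of scalars `ℤ → ℂ` for integer vectors. -/
def toC (ι : Type) [Fintype ι] : (ι → ℤ) →ₗ[ℤ] (ι → ℂ) where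
  toFun v i := (v i : ℂ)
  map_add' u v := by funext i; simp
  map_smul' c v := by funext i; simp

/-- The `ℤ`-valued bilinear form attached to a Gram matrix `G`. -/
def bZ {ι : Type} [Fintype ι] (G : Matrix ι ι ℤ) (x y : ι → ℤ) : ℤ :=
  dotProduct x (Matrix.mulVec G y)

/-- The `ℂ`-bilinear extension of the form attached to a Gram matrix `G`. -/
noncomputable def bC {ι : Type} [Fintype ι] (G : Matrix ι ι ℤ) (x y : ι → ℂ) : ℂ :=
  dotProduct x (Matrix.mulVec (G.map (Int.cast : ℤ → ℂ)) y)

/-- The Gram matrix `G` has `p` positive and `q` negative squares in a real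
diagonalization, i.e. the lattice has signature `(p,q)`. -/
def HasSignature {ι : Type} [Fintype ι] [DecidableEq ι] (G : Matrix ι ι ℤ) (p q : ℕ) : Prop :=
  ∃ (P : Matrix ι ι ℝ) (d : ι → ℝ), IsUnit P.det ∧
    Matrix.transpose P * G.map (Int.cast : ℤ → ℝ) * P = Matrix.diagonal d ∧
    Nat.card {i // 0 < d i} = p ∧ Nat.card {i // d i < 0} = q

/-- The `ℂ`-linear extension of a `ℤ`-linear endomorphism of the lattice. -/
noncomputable def extC {ι : Type} [Fintype ι] [DecidableEq ι]
    (g : (ι → ℤ) →ₗ[ℤ] (ι → ℤ)) : (ι → ℂ) →ₗ[ℂ] (ι → ℂ) :=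
  Matrix.toLin' ((LinearMap.toMatrix' g).map (Int.cast : ℤ → ℂ))

/-!
Since `g` is an isometry fixing `x` and multiplying `w`, `w̄` by `α ≠ 1`, `ᾱ ≠ 1`, the vector `x`
is orthogonal to `w` and `w̄`. The conjugate `x̄` is fixed by `g` as well, and the complex fixed
vectors of an integral matrix are spanned by its integral fixed vectors; these lie in `S`, so
`x ∈ T ⊗ ℂ` gives `(x, x̄) = 0`. Finally `w` and `w̄` span a positive definite plane for the
Hermitian form `(ū, v)`, which has exactly two positive directions, so its orthogonal complement is
negative definite and `x = 0`.
-/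

open Module Matrix

section SesquilinearForm

open RCLike

variable {𝕜 V W : Type*} [RCLike 𝕜] [AddCommGroup V] [Module 𝕜 V] [AddCommGroup W] [Module 𝕜 W]
  {B : V →ₗ⋆[𝕜] V →ₗ[𝕜] 𝕜}

lemma re_apply_sum_smul_self_of_isOrthoᵢ {κ : Type*} [Fintype κ] {e : κ → V} (he : B.IsOrthoᵢ e)
    (r : κ → 𝕜) :
    re (B (∑ i, r i • e i) (∑ i, r i • e i)) = ∑ i, ‖r i‖ ^ 2 * re (B (e i) (e i)) := by
  have hdiag : ∀ i, ∑ j, B (r i • e i) (r j • e j) = (‖r i‖ ^ 2 : ℝ) * B (e i) (e i) := by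
    intro i
    rw [Finset.sum_eq_single i (fun j _ hji => by simp [he hji.symm]) (by simp)]
    simp only [map_smulₛₗ, LinearMap.smul_apply, smul_eq_mul, RingHom.id_apply, ← mul_assoc,
      RCLike.mul_conj]
    norm_cast
  calc re (B (∑ i, r i • e i) (∑ i, r i • e i))
      = re (∑ i, ∑ j, B (r i • e i) (r j • e j)) := by
        rw [map_sum B, LinearMap.sum_apply]
        simp only [map_sum]
    _ = _ := by simp only [hdiag, map_sum, re_ofReal_mul]

theorem eq_zero_of_isOrthoᵢ_of_finrank_le [FiniteDimensional 𝕜 W] (hB : B.IsRefl)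
    (π : V →ₗ[𝕜] W) (hneg : ∀ v, π v = 0 → v ≠ 0 → re (B v v) < 0)
    {κ : Type*} [Fintype κ] (hκ : finrank 𝕜 W ≤ Fintype.card κ) {u : κ → V} (hu : B.IsOrthoᵢ u)
    (hpos : ∀ i, 0 < re (B (u i) (u i))) {c : V} (hc : ∀ i, B (u i) c = 0)
    (hcc : 0 ≤ re (B c c)) : c = 0 := by
  -- some nontrivial combination of `c` and the `u i` lies in `ker π`; its norm is a nonnegative
  -- combination of theirs, so it vanishes, and only `c` can occur in it.
  let e : Option κ → V := fun o => o.elim c u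
  have he : B.IsOrthoᵢ e := by
    rintro (_ | i) (_ | j) hij
    exacts [absurd rfl hij, hB _ _ (hc j), hc i, hu (Option.some_injective _ |>.ne_iff.1 hij)]
  have hnn : ∀ o, 0 ≤ re (B (e o) (e o)) := by
    rintro (_ | i)
    exacts [hcc, (hpos i).le]
  obtain ⟨r, hr_ker, hr0⟩ := Submodule.exists_mem_ne_zero_of_ne_bot <|
    LinearMap.ker_ne_bot_of_finrank_lt (f := π ∘ₗ Fintype.linearCombination 𝕜 e) <| by
      simp only [finrank_fintype_fun_eq_card, Fintype.card_option]
      omega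
  have hr : π (∑ o, r o • e o) = 0 := hr_ker
  have hsum := re_apply_sum_smul_self_of_isOrthoᵢ he r
  have hterms_nn : ∀ o ∈ Finset.univ, 0 ≤ ‖r o‖ ^ 2 * re (B (e o) (e o)) :=
    fun o _ => mul_nonneg (sq_nonneg _) (hnn o)
  have hv : ∑ o, r o • e o = 0 := by
    by_contra hv
    linarith [hneg _ hr hv, Finset.sum_nonneg hterms_nn]
  simp only [hv, map_zero] at hsum
  rw [eq_comm, Finset.sum_eq_zero_iff_of_nonneg hterms_nn] at hsum
  have hsome : ∀ i, r (some i) = 0 := fun i => by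
    simpa [e, (hpos i).ne'] using hsum (some i) (Finset.mem_univ _)
  have hnone : r none ≠ 0 := fun h => hr0 <| funext <| by rintro (_ | i) <;> simp [h, hsome]
  simpa [Fintype.sum_option, hsome, e, hnone] using hv

end SesquilinearForm

lemma apply_eq_zero_of_fixed_of_eigenvector {K V : Type*} [CommRing K] [NoZeroDivisors K]
    [AddCommGroup V] [Module K V] (B : V →ₗ[K] V →ₗ[K] K) {f : V →ₗ[K] V}
    (hf : ∀ u v, B (f u) (f v) = B u v) {u w : V} {α : K} (hu : f u = u) (hw : f w = α • w)
    (hα : α ≠ 1) : B u w = 0 := by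
  have h : (α - 1) * B u w = 0 := by
    rw [sub_one_mul, sub_eq_zero, ← smul_eq_mul, ← map_smul, ← hw, ← hu, hf, hu]
  exact (mul_eq_zero.1 h).resolve_left (sub_ne_zero.2 hα)

theorem mem_span_algebraMap_comp_ker {R K ι κ : Type*} [CommRing R] [IsDomain R]
    [IsPrincipalIdealRing R] [CommRing K] [Algebra R K] [Module.IsTorsionFree R K]
    [Fintype ι] [Fintype κ] (M : Matrix κ ι R) {z : ι → K}
    (hz : M.map (algebraMap R K) *ᵥ z = 0) :
    z ∈ Submodule.span K ((algebraMap R K ∘ ·) '' {y | M *ᵥ y = 0}) := by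
  -- expand the coordinates of `z` in a basis of the free `R`-module they span
  let V := Submodule.span R (Set.range z)
  have : Module.Finite R V := Module.Finite.span_of_finite R (Set.finite_range z)
  let b := Module.Free.chooseBasis R V
  let zV : ι → V := fun i => ⟨z i, Submodule.subset_span ⟨i, rfl⟩⟩
  let y : Module.Free.ChooseBasisIndex R V → ι → R := fun j i => b.repr (zV i) j
  have hMzV : ∀ k, ∑ i, M k i • zV i = 0 := fun k => Subtype.ext <| by
    simpa [mulVec, dotProduct, Algebra.smul_def] using congrFun hz k
  have hy : ∀ j, M *ᵥ y j = 0 := fun j => funext fun k => by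
    simpa [mulVec, dotProduct, y] using congrArg (fun v => b.repr v j) (hMzV k)
  have hz_eq : z = ∑ j, (b j : K) • (algebraMap R K ∘ y j) := funext fun i => by
    change (zV i : K) = _
    conv_lhs => rw [← b.sum_repr (zV i)]
    simp only [Finset.sum_apply, Pi.smul_apply, Function.comp_apply, smul_eq_mul,
      Submodule.coe_sum, Submodule.coe_smul]
    simp only [Algebra.smul_def, y, mul_comm]
  rw [hz_eq]
  exact Submodule.sum_mem _ fun j _ =>
    Submodule.smul_mem _ _ (Submodule.subset_span ⟨y j, hy j, rfl⟩)

lemma star_mulVec_of_map_star {m n α : Type*} [Fintype n] [CommSemiring α] [StarRing α]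
    {M : Matrix m n α} (hM : M.map star = M) (v : n → α) : star (M *ᵥ v) = M *ᵥ star v := by
  rw [star_mulVec, conjTranspose, transpose_map, hM, vecMul_transpose]

lemma ne_zero_of_card_pos_add_card_neg {ι α : Type*} [Fintype ι] [LinearOrder α] [Zero α]
    {d : ι → α} (h : Nat.card {i // 0 < d i} + Nat.card {i // d i < 0} = Fintype.card ι)
    (i : ι) : d i ≠ 0 := by
  classical
  intro hi
  have hdisj : Disjoint (fun j => 0 < d j) (fun j => d j < 0) :=
    fun _ hp hn j hj => (lt_asymm (hp j hj) (hn j hj)).elim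
  have hlt := Fintype.card_subtype_lt (p := fun j => 0 < d j ∨ d j < 0) (x := i) (by simp [hi])
  rw [Fintype.card_subtype_or_disjoint _ _ hdisj] at hlt
  simp only [Nat.card_eq_fintype_card] at h
  omega

lemma sum_mul_normSq_neg {ι : Type*} [Fintype ι] {d : ι → ℝ} (hd : ∀ i, d i ≠ 0) {a : ι → ℂ}
    (ha : a ≠ 0) (ha_pos : ∀ i, 0 < d i → a i = 0) : ∑ i, d i * Complex.normSq (a i) < 0 := by
  obtain ⟨i, hi⟩ := Function.ne_iff.1 ha
  have hdi : d i < 0 := (hd i).lt_or_gt.resolve_right fun h => hi (ha_pos i h)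
  have hterm : ∀ j ∈ Finset.univ, d j * Complex.normSq (a j) ≤ 0 := fun j _ => by
    rcases lt_or_ge 0 (d j) with hj | hj
    · simp [ha_pos j hj]
    · exact mul_nonpos_of_nonpos_of_nonneg hj (Complex.normSq_nonneg _)
  calc ∑ j, d j * Complex.normSq (a j) < ∑ _j : ι, (0 : ℝ) :=
        Finset.sum_lt_sum hterm ⟨i, Finset.mem_univ i,
          mul_neg_of_neg_of_pos hdi (Complex.normSq_pos.2 (by simpa using hi))⟩
    _ = 0 := Finset.sum_const_zero

section Lattice

variable {ι : Type} [Fintype ι]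

noncomputable def bCₗ (G : Matrix ι ι ℤ) : (ι → ℂ) →ₗ[ℂ] (ι → ℂ) →ₗ[ℂ] ℂ :=
  LinearMap.mk₂ ℂ (bC G) (fun _ _ _ => add_dotProduct _ _ _) (fun _ _ _ => smul_dotProduct _ _ _)
    (fun _ _ _ => by simp only [bC, mulVec_add, dotProduct_add])
    (fun _ _ _ => by simp only [bC, mulVec_smul, dotProduct_smul])

lemma bCₗ_apply (G : Matrix ι ι ℤ) (x y : ι → ℂ) : bCₗ G x y = bC G x y :=
  rfl

noncomputable def hermC (G : Matrix ι ι ℤ) : (ι → ℂ) →ₗ⋆[ℂ] (ι → ℂ) →ₗ[ℂ] ℂ :=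
  (bCₗ G).comp (starLinearEquiv ℂ).toLinearMap

lemma hermC_apply (G : Matrix ι ι ℤ) (x y : ι → ℂ) : hermC G x y = bC G (star x) y :=
  bCₗ_apply G _ _

lemma bC_toC_toC (G : Matrix ι ι ℤ) (x y : ι → ℤ) : bC G (toC ι x) (toC ι y) = bZ G x y := by
  simp [bC, bZ, toC, dotProduct, mulVec]

lemma toC_single [DecidableEq ι] (i : ι) : toC ι (Pi.single i 1) = Pi.single i 1 := by
  ext j
  by_cases h : j = i <;> simp [toC, h]

lemma star_bC (G : Matrix ι ι ℤ) (x y : ι → ℂ) : star (bC G x y) = bC G (star x) (star y) := by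
  simp [bC, dotProduct, mulVec, star_sum]

lemma bC_comm {G : Matrix ι ι ℤ} (hG : G.IsSymm) (x y : ι → ℂ) : bC G x y = bC G y x := by
  rw [bC, bC, dotProduct_comm, ← vecMul_transpose, ← dotProduct_mulVec, ← transpose_map, hG.eq]

lemma hermC_isSymm {G : Matrix ι ι ℤ} (hG : G.IsSymm) : (hermC G).IsSymm :=
  ⟨fun x y => by rw [hermC_apply, hermC_apply, starRingEnd_apply, star_bC, star_star, bC_comm hG]⟩

lemma bC_eq_zero_of_mem_span {G : Matrix ι ι ℤ} {S T : Set (ι → ℤ)}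
    (hST : ∀ t ∈ T, ∀ s ∈ S, bZ G t s = 0) {u v : ι → ℂ}
    (hu : u ∈ Submodule.span ℂ (toC ι '' T)) (hv : v ∈ Submodule.span ℂ (toC ι '' S)) :
    bC G u v = 0 := by
  have huv := Submodule.apply_mem_map₂ (bCₗ G) hu hv
  rw [Submodule.map₂_span_span, Submodule.span_eq_bot.2, Submodule.mem_bot, bCₗ_apply] at huv
  · exact huv
  rintro _ ⟨_, ⟨t, ht, rfl⟩, _, ⟨s, hs, rfl⟩, rfl⟩
  change bCₗ G (toC ι t) (toC ι s) = 0
  rw [bCₗ_apply, bC_toC_toC, hST t ht s hs, Int.cast_zero]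

end Lattice

section Isometry

variable {ι : Type} [Fintype ι] [DecidableEq ι]

lemma extC_apply (g : (ι → ℤ) →ₗ[ℤ] (ι → ℤ)) (u : ι → ℂ) :
    extC g u = (LinearMap.toMatrix' g).map (Int.cast : ℤ → ℂ) *ᵥ u :=
  Matrix.toLin'_apply _ _

lemma extC_toC (g : (ι → ℤ) →ₗ[ℤ] (ι → ℤ)) (x : ι → ℤ) : extC g (toC ι x) = toC ι (g x) := by
  ext i
  change _ = ((g x i : ℤ) : ℂ)
  rw [extC_apply, ← LinearMap.toMatrix'_mulVec g x]
  simp only [mulVec, dotProduct, Matrix.map_apply, Int.cast_sum, Int.cast_mul]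
  rfl

lemma star_extC (g : (ι → ℤ) →ₗ[ℤ] (ι → ℤ)) (u : ι → ℂ) : star (extC g u) = extC g (star u) := by
  rw [extC_apply, extC_apply, star_mulVec_of_map_star]
  ext
  simp

variable {G : Matrix ι ι ℤ} {g : (ι → ℤ) →ₗ[ℤ] (ι → ℤ)}

lemma bC_extC_extC (hg : ∀ x y, bZ G (g x) (g y) = bZ G x y) (u v : ι → ℂ) :
    bC G (extC g u) (extC g v) = bC G u v := by
  have h : (bCₗ G).compl₁₂ (extC g) (extC g) = bCₗ G :=
    LinearMap.ext_basis (Pi.basisFun ℂ ι) (Pi.basisFun ℂ ι) fun i j => by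
      simp only [LinearMap.compl₁₂_apply, Pi.basisFun_apply, ← toC_single, extC_toC, bCₗ_apply,
        bC_toC_toC, hg]
  exact LinearMap.congr_fun₂ h u v

lemma bC_eq_zero_of_extC_fixed (hg : ∀ x y, bZ G (g x) (g y) = bZ G x y) {w : ι → ℂ} {α : ℂ}
    (hgw : extC g w = α • w) (hα : α ≠ 1) {u : ι → ℂ} (hu : extC g u = u) :
    bC G u w = 0 ∧ bC G u (star w) = 0 := by
  have hgw' : extC g (star w) = star α • star w := by rw [← star_extC, hgw, star_smul]
  have hα' : star α ≠ 1 := by rwa [Ne, ← star_one ℂ, star_inj]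
  exact ⟨apply_eq_zero_of_fixed_of_eigenvector (bCₗ G) (bC_extC_extC hg) hu hgw hα,
    apply_eq_zero_of_fixed_of_eigenvector (bCₗ G) (bC_extC_extC hg) hu hgw' hα'⟩

lemma mem_span_toC_fixedPoints {z : ι → ℂ} (hz : extC g z = z) :
    z ∈ Submodule.span ℂ (toC ι '' {v | g v = v}) := by
  have hker : {y | (LinearMap.toMatrix' g - 1) *ᵥ y = 0} = {v | g v = v} := by
    ext v
    simp [sub_mulVec, sub_eq_zero, LinearMap.toMatrix'_mulVec]
  have hcast : (algebraMap ℤ ℂ ∘ ·) = toC ι := funext fun v => funext fun i => by simp [toC]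
  rw [← hker, ← hcast]
  refine mem_span_algebraMap_comp_ker _ ?_
  rw [← RingHom.mapMatrix_apply, map_sub, map_one, RingHom.mapMatrix_apply, sub_mulVec,
    one_mulVec, sub_eq_zero]
  simpa [extC_apply] using hz

end Isometry

section Signature

variable {ι : Type} [Fintype ι] [DecidableEq ι] {G : Matrix ι ι ℤ}

lemma bC_mulVec_mulVec_of_eq_diagonal {P : Matrix ι ι ℝ} {d : ι → ℝ}
    (h : Pᵀ * G.map (Int.cast : ℤ → ℝ) * P = diagonal d) (a b : ι → ℂ) :
    bC G (P.map (↑) *ᵥ a) (P.map (↑) *ᵥ b) = ∑ i, (d i : ℂ) * (a i * b i) := by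
  have hC : (P.map (↑))ᵀ * G.map (Int.cast : ℤ → ℂ) * P.map (↑) = diagonal ((↑) ∘ d) := by
    have hcoe : (Complex.ofRealHom : ℝ → ℂ) = (↑) := rfl
    have hmap := congrArg (Matrix.map · Complex.ofRealHom) h
    simp only [Matrix.map_mul, transpose_map, Matrix.map_map] at hmap
    simpa [diagonal_map, Function.comp_def, hcoe] using hmap
  rw [bC, ← vecMul_transpose, ← dotProduct_mulVec, mulVec_mulVec, mulVec_mulVec, hC]
  simp [dotProduct, mulVec_diagonal, mul_left_comm]

theorem eq_zero_of_hasSignature (hG : G.IsSymm) {p q : ℕ} (hsig : HasSignature G p q)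
    (hcard : Fintype.card ι = p + q) {κ : Type*} [Fintype κ] (hκ : p ≤ Fintype.card κ)
    {u : κ → ι → ℂ} (hu : (hermC G).IsOrthoᵢ u) (hpos : ∀ i, 0 < RCLike.re (hermC G (u i) (u i)))
    {c : ι → ℂ} (hc : ∀ i, hermC G (u i) c = 0) (hcc : 0 ≤ RCLike.re (hermC G c c)) : c = 0 := by
  obtain ⟨P, d, hP, hPGP, hp, hq⟩ := hsig
  have hd := ne_zero_of_card_pos_add_card_neg (d := d) (by omega)
  set Pc : Matrix ι ι ℂ := P.map (↑)
  have hPc : IsUnit Pc.det := by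
    have := hP.map Complex.ofRealHom
    rwa [RingHom.map_det, RingHom.mapMatrix_apply] at this
  let π : (ι → ℂ) →ₗ[ℂ] ({i // 0 < d i} → ℂ) :=
    LinearMap.funLeft ℂ ℂ Subtype.val ∘ₗ toLin' Pc⁻¹
  refine eq_zero_of_isOrthoᵢ_of_finrank_le (hermC_isSymm hG).isRefl π (fun v hv hv0 => ?_)
    (by simpa [Nat.card_eq_fintype_card] using hp.le.trans hκ) hu hpos hc hcc
  obtain ⟨a, rfl⟩ : ∃ a, v = Pc *ᵥ a :=
    ⟨Pc⁻¹ *ᵥ v, by rw [mulVec_mulVec, mul_nonsing_inv _ hPc, one_mulVec]⟩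
  have ha : ∀ i, 0 < d i → a i = 0 := fun i hi => by
    simpa [π, mulVec_mulVec, nonsing_inv_mul _ hPc] using congrFun hv ⟨i, hi⟩
  have hstar : star (Pc *ᵥ a) = Pc *ᵥ star a := star_mulVec_of_map_star (by ext; simp [Pc]) a
  rw [hermC_apply, hstar, bC_mulVec_mulVec_of_eq_diagonal hPGP]
  simp only [RCLike.re_to_complex, Complex.re_sum, Pi.star_apply, Complex.star_def,
    ← Complex.normSq_eq_conj_mul_self, Complex.re_ofReal_mul, Complex.ofReal_re]
  exact sum_mul_normSq_neg hd (by rintro rfl; simp at hv0) ha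

end Signature

theorem stmt_3_general (n : ℕ) (G : Matrix (Fin (n + 2)) (Fin (n + 2)) ℤ)
    (hsym : G.IsSymm) (hsig : HasSignature G 2 n)
    (w : Fin (n + 2) → ℂ) (hww : bC G w w = 0)
    (hwwbar : ∃ t : ℝ, 0 < t ∧ bC G w (star w) = (t : ℂ))
    (S T : Set (Fin (n + 2) → ℤ))
    (hS : S = {x | bC G (toC _ x) w = 0 ∧ bC G (toC _ x) (star w) = 0})
    (hT : T = {x | ∀ s ∈ S, bZ G x s = 0})
    (g : (Fin (n + 2) → ℤ) ≃ₗ[ℤ] (Fin (n + 2) → ℤ))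
    (hgiso : ∀ x y, bZ G (g x) (g y) = bZ G x y)
    (α : ℂ) (hα1 : α ≠ 1)
    (hgw : extC (g : (Fin (n + 2) → ℤ) →ₗ[ℤ] (Fin (n + 2) → ℤ)) w = α • w) :
    ∀ x ∈ Submodule.span ℂ (⇑(toC (Fin (n + 2))) '' T),
      extC (g : (Fin (n + 2) → ℤ) →ₗ[ℤ] (Fin (n + 2) → ℤ)) x = x → x = 0 := by
  intro x hxT hgx
  obtain ⟨t, ht, hwt⟩ := hwwbar
  have hfix (u) := bC_eq_zero_of_extC_fixed hgiso hgw hα1 (u := u)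
  obtain ⟨hxw, hxw'⟩ := hfix x hgx
  have hfixS : {v | g v = v} ⊆ S := fun v hv => by
    rw [hS]
    exact hfix _ (by rw [extC_toC]; exact congrArg _ hv)
  have hxx : bC G x (star x) = 0 :=
    bC_eq_zero_of_mem_span (fun t ht s hs => by rw [hT] at ht; exact ht s hs) hxT <|
      Submodule.span_mono (Set.image_mono hfixS) <|
        mem_span_toC_fixedPoints (by rw [← star_extC, hgx])
  have hw'w : bC G (star w) w = t := by rw [bC_comm hsym, hwt]
  refine eq_zero_of_hasSignature hsym hsig (by simp [add_comm]) (u := ![w, star w]) le_rfl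
    ?_ ?_ ?_ ?_
  · have hw'w' : bC G (star w) (star w) = 0 := by rw [← star_bC, hww, star_zero]
    rw [LinearMap.isOrthoᵢ_def]
    intro i j hij
    fin_cases i <;> fin_cases j <;> simp [hermC_apply, hww, hw'w'] at hij ⊢
  · intro i
    fin_cases i <;> simp [hermC_apply, hw'w, hwt, ht]
  · intro i
    fin_cases i <;> simp [hermC_apply, bC_comm hsym _ x, hxw, hxw']
  · simp [hermC_apply, bC_comm hsym _ x, hxx]

/-- **Lemma 2.5 (splitting_of_T, fixed vectors).** In the situation of Lemma 2.2, let
`g` be an isometry of `L` with `g(w) = α·w` for some `α ∈ ℂ*`, `α ≠ 1`.  If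
`x ∈ T⊗ℂ` satisfies `g(x) = x`, then `x = 0`. -/
theorem stmt_3 (n : ℕ) (G : Matrix (Fin (n + 2)) (Fin (n + 2)) ℤ)
    (hsym : G.IsSymm) (hdet : G.det ≠ 0) (hsig : HasSignature G 2 n)
    (w : Fin (n + 2) → ℂ) (hww : bC G w w = 0)
    (hwwbar : ∃ t : ℝ, 0 < t ∧ bC G w (star w) = (t : ℂ))
    (S T : Set (Fin (n + 2) → ℤ))
    (hS : S = {x | bC G (toC _ x) w = 0 ∧ bC G (toC _ x) (star w) = 0})
    (hT : T = {x | ∀ s ∈ S, bZ G x s = 0})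
    (g : (Fin (n + 2) → ℤ) ≃ₗ[ℤ] (Fin (n + 2) → ℤ))
    (hgiso : ∀ x y, bZ G (g x) (g y) = bZ G x y)
    (α : ℂ) (hα0 : α ≠ 0) (hα1 : α ≠ 1)
    (hgw : extC (g : (Fin (n + 2) → ℤ) →ₗ[ℤ] (Fin (n + 2) → ℤ)) w = α • w) :
    ∀ x ∈ Submodule.span ℂ (⇑(toC (Fin (n + 2))) '' T),
      extC (g : (Fin (n + 2) → ℤ) →ₗ[ℤ] (Fin (n + 2) → ℤ)) x = x → x = 0 :=
  stmt_3_general n G hsym hsig w hww hwwbar S T hS hT g hgiso α hα1 hgw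

end A0607339
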